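/- Let d ≥ 1, let a : ℤ^d × ℕ → ℝ satisfy a(-x,t) = a(x,t) for all (x,t), and let z ∈ ℂ satisfy ∑_{(x,t)} |a(x,t)|·|z|^t < ∞. Define â(m, z) = ∑_{(x,t)} a(x,t)·e^{i m·x}·z^t and Ā(m) = ∑_{(x,t)} |a(x,t)|·cos(m·x)·|z|^t for m ∈ ℝ^d. Fix l, k ∈ ℝ^d and suppose â(l,z) ≠ 1, â(l+k,z) ≠ 1 and â(l-k,z) ≠ 1, and set Â(m,z) = 1/(1 - â(m,z)). Then |(1/2)(Â(l+k,z) + Â(l-k,z) - 2Â(l,z))| ≤ (Ā(0) - Ā(k)) · [ ((|Â(l+k,z)| + |Â(l-k,z)|)/2)·|Â(l,z)| + |Â(l,z)|·|Â(l+k,z)|·|Â(l-k,z)|·(Ā(0) - Ā(2l)) ]. -/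

import Mathlib

open scoped BigOperators

/-- The Fourier–Laplace transform `â(m, z) = ∑ a(x,t) e^{i m·x} z^t`. -/
noncomputable def hatA {d : ℕ} (a : (Fin d → ℤ) × ℕ → ℝ) (z : ℂ) (m : Fin d → ℝ) : ℂ :=
  ∑' p : (Fin d → ℤ) × ℕ,
    (a p : ℂ) * Complex.exp (Complex.I * ((∑ j, m j * (p.1 j : ℝ) : ℝ) : ℂ)) * z ^ p.2

/-- `Ā(m) = ∑ |a(x,t)| cos(m·x) |z|^t`. -/
noncomputable def barA {d : ℕ} (a : (Fin d → ℤ) × ℕ → ℝ) (z : ℂ) (m : Fin d → ℝ) : ℝ :=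
  ∑' p : (Fin d → ℤ) × ℕ,
    |a p| * Real.cos (∑ j, m j * (p.1 j : ℝ)) * ‖z‖ ^ p.2

/-- Cauchy–Schwarz for tsums. -/
lemma tsum_cs {ι : Type*} {r f g : ι → ℝ} (hr : Summable r) (hfs : Summable f)
    (hgs : Summable g) (hr0 : ∀ i, 0 ≤ r i) (hf0 : ∀ i, 0 ≤ f i) (hg0 : ∀ i, 0 ≤ g i)
    (hsq : ∀ i, r i ^ 2 = f i * g i) :
    (∑' i, r i) ^ 2 ≤ (∑' i, f i) * (∑' i, g i) := by
  have hF : 0 ≤ (∑' i, f i) * (∑' i, g i) := mul_nonneg (tsum_nonneg hf0) (tsum_nonneg hg0)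
  have h1 : ∑' i, r i ≤ Real.sqrt ((∑' i, f i) * (∑' i, g i)) := by
    refine Summable.tsum_le_of_sum_le hr fun s => ?_
    rw [Real.le_sqrt (Finset.sum_nonneg fun i _ => hr0 i) hF]
    calc (∑ i ∈ s, r i) ^ 2 ≤ (∑ i ∈ s, f i) * (∑ i ∈ s, g i) :=
          Finset.sum_sq_le_sum_mul_sum_of_sq_eq_mul s (fun i _ => hf0 i) (fun i _ => hg0 i)
            (fun i _ => hsq i)
      _ ≤ _ := mul_le_mul (Summable.sum_le_tsum s (fun i _ => hf0 i) hfs)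
            (Summable.sum_le_tsum s (fun i _ => hg0 i) hgs)
            (Finset.sum_nonneg fun i _ => hg0 i) (tsum_nonneg hf0)
  calc (∑' i, r i) ^ 2 ≤ (Real.sqrt ((∑' i, f i) * (∑' i, g i))) ^ 2 :=
        pow_le_pow_left₀ (tsum_nonneg hr0) h1 2
    _ = _ := Real.sq_sqrt hF

lemma exp_I_real (θ : ℝ) : Complex.exp (Complex.I * (θ : ℂ)) =
    (Real.cos θ : ℂ) + (Real.sin θ : ℂ) * Complex.I := by
  rw [mul_comm, Complex.exp_mul_I, Complex.ofReal_cos, Complex.ofReal_sin]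

lemma abs_exp_I_real (θ : ℝ) : ‖(Complex.exp (Complex.I * (θ : ℂ)))‖ = 1 := by
  rw [Complex.norm_exp]
  simp

lemma stepB_id (c zt : ℂ) (A B : ℝ) :
    c * Complex.exp (Complex.I * ((A + B : ℝ) : ℂ)) * zt
      + c * Complex.exp (Complex.I * ((A - B : ℝ) : ℂ)) * zt
      - 2 * (c * Complex.exp (Complex.I * ((A : ℝ) : ℂ)) * zt)
    = c * Complex.exp (Complex.I * ((A : ℝ) : ℂ)) * zt * (2 * (Real.cos B : ℂ) - 2) := by
  rw [show Complex.I * ((A + B : ℝ) : ℂ) = Complex.I * (A : ℂ) + Complex.I * (B : ℂ) by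
        push_cast; ring,
      show Complex.I * ((A - B : ℝ) : ℂ) = Complex.I * (A : ℂ) + Complex.I * ((-B : ℝ) : ℂ) by
        push_cast; ring,
      Complex.exp_add, Complex.exp_add, exp_I_real, exp_I_real, exp_I_real]
  push_cast [Real.cos_neg, Real.sin_neg]
  ring

lemma stepC_id (aa : ℝ) (zt : ℂ) (A B : ℝ) :
    (((aa : ℂ) * Complex.exp (Complex.I * ((A + B : ℝ) : ℂ)) * zt
        - (aa : ℂ) * Complex.exp (Complex.I * ((A - B : ℝ) : ℂ)) * zt)
      + ((aa : ℂ) * Complex.exp (Complex.I * ((-(A + B) : ℝ) : ℂ)) * zt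
        - (aa : ℂ) * Complex.exp (Complex.I * ((-(A - B) : ℝ) : ℂ)) * zt)) / 2
    = ((aa * (-2 * (Real.sin B * Real.sin A)) : ℝ) : ℂ) * zt := by
  rw [show Complex.I * ((A + B : ℝ) : ℂ) = Complex.I * (A : ℂ) + Complex.I * (B : ℂ) by
        push_cast; ring,
      show Complex.I * ((A - B : ℝ) : ℂ) = Complex.I * (A : ℂ) + Complex.I * ((-B : ℝ) : ℂ) by
        push_cast; ring,
      show Complex.I * ((-(A + B) : ℝ) : ℂ)
          = Complex.I * ((-A : ℝ) : ℂ) + Complex.I * ((-B : ℝ) : ℂ) by push_cast; ring,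
      show Complex.I * ((-(A - B) : ℝ) : ℂ)
          = Complex.I * ((-A : ℝ) : ℂ) + Complex.I * ((B : ℝ) : ℂ) by push_cast; ring,
      Complex.exp_add, Complex.exp_add, Complex.exp_add, Complex.exp_add,
      exp_I_real, exp_I_real, exp_I_real, exp_I_real]
  push_cast [Real.cos_neg, Real.sin_neg]
  ring_nf
  rw [Complex.I_sq]
  ring

lemma key_id (u v w : ℂ) (hu : u ≠ 0) (hv : v ≠ 0) (hw : w ≠ 0) :
    (1/2 : ℂ) * (u⁻¹ + v⁻¹ - 2*w⁻¹)
      = w⁻¹ * ((u⁻¹ + v⁻¹)/2) * ((2*w - u - v)/2) + w⁻¹*u⁻¹*v⁻¹*((v-u)^2/4) := by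
  have e1 : u⁻¹ - w⁻¹ = u⁻¹ * (w - u) * w⁻¹ := by field_simp
  have e2 : v⁻¹ - w⁻¹ = v⁻¹ * (w - v) * w⁻¹ := by field_simp
  have e3 : u⁻¹ - v⁻¹ = u⁻¹ * v⁻¹ * (v - u) := by field_simp
  linear_combination (1/2 : ℂ) * e1 + (1/2 : ℂ) * e2 + (w⁻¹ * (v - u)/4) * e3

set_option maxHeartbeats 1000000 in
theorem modified_trigonometric_lemma
    (d : ℕ) (hd : 1 ≤ d) (a : (Fin d → ℤ) × ℕ → ℝ)
    (hsym : ∀ x : Fin d → ℤ, ∀ t : ℕ, a (-x, t) = a (x, t))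
    (z : ℂ)
    (hsum : Summable (fun p : (Fin d → ℤ) × ℕ => |a p| * ‖z‖ ^ p.2))
    (l k : Fin d → ℝ)
    (h₀ : hatA a z l ≠ 1) (hplus : hatA a z (l + k) ≠ 1) (hminus : hatA a z (l - k) ≠ 1) :
    ‖((1 / 2) * ((1 - hatA a z (l + k))⁻¹ + (1 - hatA a z (l - k))⁻¹
        - 2 * (1 - hatA a z l)⁻¹))‖ ≤
      (barA a z 0 - barA a z k) *
        (((‖(1 - hatA a z (l + k))⁻¹‖ + ‖(1 - hatA a z (l - k))⁻¹‖) / 2) *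
            ‖(1 - hatA a z l)⁻¹‖
          + ‖(1 - hatA a z l)⁻¹‖ * ‖(1 - hatA a z (l + k))⁻¹‖ *
              ‖(1 - hatA a z (l - k))⁻¹‖ *
              (barA a z 0 - barA a z (fun j => 2 * l j))) := by
  classical
  set ip : (Fin d → ℝ) → (Fin d → ℤ) → ℝ := fun m x => ∑ j, m j * (x j : ℝ) with hip
  set W : (Fin d → ℤ) × ℕ → ℝ := fun p => |a p| * ‖z‖ ^ p.2 with hW
  have hW0 : ∀ p, 0 ≤ W p := fun p => mul_nonneg (abs_nonneg _) (pow_nonneg (norm_nonneg _) _)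
  have hWs : Summable W := hsum
  set φ : (Fin d → ℝ) → (Fin d → ℤ) × ℕ → ℂ := fun m p =>
    (a p : ℂ) * Complex.exp (Complex.I * ((ip m p.1 : ℝ) : ℂ)) * z ^ p.2 with hφ
  have hhat : ∀ m, hatA a z m = ∑' p, φ m p := fun m => rfl
  have hnormφ : ∀ m p, ‖(φ m p)‖ = W p := by
    intro m p
    simp only [hφ, norm_mul, Complex.norm_real, Real.norm_eq_abs, abs_exp_I_real, norm_pow, mul_one, hW]
  have hφs : ∀ m, Summable (φ m) := by
    intro m
    refine Summable.of_norm ?_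
    simpa only [hnormφ] using hWs
  -- inner product lemmas
  have hip_add : ∀ x, ip (l + k) x = ip l x + ip k x := by
    intro x; simp only [hip, Pi.add_apply, add_mul, Finset.sum_add_distrib]
  have hip_sub : ∀ x, ip (l - k) x = ip l x - ip k x := by
    intro x; simp only [hip, Pi.sub_apply, sub_mul, Finset.sum_sub_distrib]
  have hip_neg : ∀ m x, ip m (-x) = -ip m x := by
    intro m x
    simp only [hip, Pi.neg_apply, Int.cast_neg, mul_neg, ← Finset.sum_neg_distrib]
  have hip_two : ∀ x, ip (fun j => 2 * l j) x = 2 * ip l x := by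
    intro x; simp only [hip, Finset.mul_sum, mul_assoc]
  -- barA facts
  have hbar_term : ∀ m, Summable (fun p => W p * Real.cos (ip m p.1)) := by
    intro m
    refine Summable.of_abs (Summable.of_nonneg_of_le (fun p => abs_nonneg _) (fun p => ?_) hWs)
    rw [abs_mul, abs_of_nonneg (hW0 _)]
    calc W p * |Real.cos (ip m p.1)| ≤ W p * 1 :=
          mul_le_mul_of_nonneg_left (Real.abs_cos_le_one _) (hW0 _)
      _ = W p := mul_one _
  have hbar_eq : ∀ m, barA a z m = ∑' p, W p * Real.cos (ip m p.1) := by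
    intro m
    refine tsum_congr fun p => ?_
    simp only [hW, hip]; ring
  have hbar0 : barA a z 0 = ∑' p, W p := by
    rw [hbar_eq]
    refine tsum_congr fun p => ?_
    simp [hip]
  have hbar_sub : ∀ m, barA a z 0 - barA a z m = ∑' p, W p * (1 - Real.cos (ip m p.1)) := by
    intro m
    rw [hbar0, hbar_eq m, ← Summable.tsum_sub hWs (hbar_term m)]
    refine tsum_congr fun p => ?_
    ring
  have hbar_sub_summ : ∀ m, Summable (fun p => W p * (1 - Real.cos (ip m p.1))) := by
    intro m
    exact (hWs.sub (hbar_term m)).congr (fun p => by ring)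
  have hbar_nonneg : ∀ m, 0 ≤ barA a z 0 - barA a z m := by
    intro m
    rw [hbar_sub]
    exact tsum_nonneg fun p => mul_nonneg (hW0 p)
      (by nlinarith [Real.cos_le_one (ip m p.1)])
  -- Step B : the second-difference bound
  have hS : ‖(hatA a z (l + k) + hatA a z (l - k) - 2 * hatA a z l)‖
      ≤ 2 * (barA a z 0 - barA a z k) := by
    have hterm : ∀ p, φ (l + k) p + φ (l - k) p - 2 * φ l p =
        (a p : ℂ) * Complex.exp (Complex.I * ((ip l p.1 : ℝ) : ℂ)) * z ^ p.2 *
          (2 * (Real.cos (ip k p.1) : ℂ) - 2) := by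
      intro p
      simp only [hφ, hip_add, hip_sub]
      exact stepB_id _ _ _ _
    have t₁ : ∑' p, (φ (l + k) p + φ (l - k) p - 2 * φ l p)
        = (∑' p, (φ (l + k) p + φ (l - k) p)) - ∑' p, (2 : ℂ) * φ l p :=
      Summable.tsum_sub ((hφs (l + k)).add (hφs (l - k))) ((hφs l).mul_left 2)
    have t₂ : ∑' p, (φ (l + k) p + φ (l - k) p) = (∑' p, φ (l + k) p) + ∑' p, φ (l - k) p :=
      Summable.tsum_add (hφs (l + k)) (hφs (l - k))
    have t₃ : ∑' p, (2 : ℂ) * φ l p = 2 * ∑' p, φ l p := tsum_mul_left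
    have heq : hatA a z (l + k) + hatA a z (l - k) - 2 * hatA a z l =
        ∑' p, (φ (l + k) p + φ (l - k) p - 2 * φ l p) := by
      rw [hhat, hhat, hhat, t₁, t₂, t₃]
    rw [heq]
    have hnorm : ∀ p, ‖(φ (l + k) p + φ (l - k) p - 2 * φ l p)‖ =
        2 * (W p * (1 - Real.cos (ip k p.1))) := by
      intro p
      rw [hterm p, norm_mul, norm_mul, norm_mul, Complex.norm_real, Real.norm_eq_abs, abs_exp_I_real, norm_pow]
      have h4 : (2 * (Real.cos (ip k p.1) : ℂ) - 2) = ((2 * Real.cos (ip k p.1) - 2 : ℝ) : ℂ) := by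
        push_cast; ring
      have h5 : |2 * Real.cos (ip k p.1) - 2| = 2 * (1 - Real.cos (ip k p.1)) := by
        rw [abs_of_nonpos (by nlinarith [Real.cos_le_one (ip k p.1)])]
        ring
      rw [h4, Complex.norm_real, Real.norm_eq_abs, h5]
      simp only [hW]
      ring
    calc ‖(∑' p, (φ (l + k) p + φ (l - k) p - 2 * φ l p))‖
        ≤ ∑' p, ‖(φ (l + k) p + φ (l - k) p - 2 * φ l p)‖ := by
          refine norm_tsum_le_tsum_norm ?_
          simp only [hnorm]
          exact (hbar_sub_summ k).mul_left 2
      _ = 2 * (barA a z 0 - barA a z k) := by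
          simp only [hnorm]
          rw [tsum_mul_left, hbar_sub]
  -- Step C : the first-difference squared bound
  have hD2 : (‖(hatA a z (l + k) - hatA a z (l - k))‖) ^ 2
      ≤ 4 * ((barA a z 0 - barA a z k) * (barA a z 0 - barA a z (fun j => 2 * l j))) := by
    set η : (Fin d → ℤ) × ℕ → ℂ := fun p =>
      ((a p * (-2 * (Real.sin (ip k p.1) * Real.sin (ip l p.1))) : ℝ) : ℂ) * z ^ p.2 with hη
    set e : ((Fin d → ℤ) × ℕ) ≃ ((Fin d → ℤ) × ℕ) :=
      (Equiv.neg (Fin d → ℤ)).prodCongr (Equiv.refl ℕ) with he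
    set ψ : (Fin d → ℤ) × ℕ → ℂ := fun p => φ (l + k) p - φ (l - k) p with hψ
    have hψs : Summable ψ := (hφs (l + k)).sub (hφs (l - k))
    have hψes : Summable (fun p => ψ (e p)) := hψs.comp_injective e.injective
    have hterm : ∀ p, (ψ p + ψ (e p)) / 2 = η p := by
      intro p
      have he1 : (e p).1 = -p.1 := rfl
      have he2 : (e p).2 = p.2 := rfl
      have ha : a (e p) = a p := by
        rw [show e p = (-p.1, p.2) from Prod.ext he1 he2, ← Prod.mk.eta (p := p)]
        exact hsym p.1 p.2
      simp only [hψ, hφ, hη, ha, he1, he2, hip_add, hip_sub, hip_neg]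
      rw [show -ip l p.1 + -ip k p.1 = -(ip l p.1 + ip k p.1) by ring,
        show -ip l p.1 - -ip k p.1 = -(ip l p.1 - ip k p.1) by ring]
      exact stepC_id (a p) (z ^ p.2) (ip l p.1) (ip k p.1)
    have h1 : hatA a z (l + k) - hatA a z (l - k) = ∑' p, ψ p := by
      rw [hhat, hhat]
      exact (Summable.tsum_sub (hφs (l + k)) (hφs (l - k))).symm
    have h2 : ∑' p, ψ (e p) = ∑' p, ψ p := e.tsum_eq ψ
    have h3 : ∑' p, η p = ∑' p, (ψ p + ψ (e p)) / 2 := tsum_congr fun p => (hterm p).symm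
    have heq : hatA a z (l + k) - hatA a z (l - k) = ∑' p, η p := by
      rw [h1, h3, tsum_div_const, Summable.tsum_add hψs hψes, h2]
      ring
    rw [heq]
    set r : (Fin d → ℤ) × ℕ → ℝ := fun p => W p * (|Real.sin (ip k p.1)| * |Real.sin (ip l p.1)|)
      with hr
    have hr0 : ∀ p, 0 ≤ r p := fun p =>
      mul_nonneg (hW0 p) (mul_nonneg (abs_nonneg _) (abs_nonneg _))
    have hrle : ∀ p, r p ≤ W p := by
      intro p
      calc r p ≤ W p * (1 * 1) := by
            refine mul_le_mul_of_nonneg_left ?_ (hW0 p)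
            exact mul_le_mul (Real.abs_sin_le_one _) (Real.abs_sin_le_one _)
              (abs_nonneg _) zero_le_one
        _ = W p := by ring
    have hrs : Summable r := Summable.of_nonneg_of_le hr0 hrle hWs
    have habsη : ∀ p, ‖(η p)‖ = 2 * r p := by
      intro p
      simp only [hη, norm_mul, Complex.norm_real, Real.norm_eq_abs, norm_pow, hr, hW, abs_mul, abs_neg]
      rw [abs_of_nonneg (by norm_num : (0:ℝ) ≤ 2)]
      ring
    have hDle : ‖(∑' p, η p)‖ ≤ 2 * ∑' p, r p := by
      calc ‖(∑' p, η p)‖ ≤ ∑' p, ‖(η p)‖ := by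
            refine norm_tsum_le_tsum_norm ?_
            simp only [habsη]
            exact hrs.mul_left 2
        _ = 2 * ∑' p, r p := by simp only [habsη]; rw [tsum_mul_left]
    set f : (Fin d → ℤ) × ℕ → ℝ := fun p => W p * Real.sin (ip k p.1) ^ 2 with hf
    set g : (Fin d → ℤ) × ℕ → ℝ := fun p => W p * Real.sin (ip l p.1) ^ 2 with hg
    have hf0 : ∀ p, 0 ≤ f p := fun p => mul_nonneg (hW0 p) (sq_nonneg _)
    have hg0 : ∀ p, 0 ≤ g p := fun p => mul_nonneg (hW0 p) (sq_nonneg _)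
    have hfle : ∀ p, f p ≤ W p := by
      intro p
      refine (mul_le_mul_of_nonneg_left (Real.sin_sq_le_one _) (hW0 p)).trans ?_
      rw [mul_one]
    have hgle : ∀ p, g p ≤ W p := by
      intro p
      refine (mul_le_mul_of_nonneg_left (Real.sin_sq_le_one _) (hW0 p)).trans ?_
      rw [mul_one]
    have hfs : Summable f := Summable.of_nonneg_of_le hf0 hfle hWs
    have hgs : Summable g := Summable.of_nonneg_of_le hg0 hgle hWs
    have hcs : (∑' p, r p) ^ 2 ≤ (∑' p, f p) * (∑' p, g p) := by
      refine tsum_cs hrs hfs hgs hr0 hf0 hg0 fun p => ?_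
      simp only [hr, hf, hg, mul_pow, sq_abs]
      ring
    have hfbound : ∑' p, f p ≤ 2 * (barA a z 0 - barA a z k) := by
      rw [hbar_sub, ← tsum_mul_left]
      refine Summable.tsum_le_tsum (fun p => ?_) hfs ((hbar_sub_summ k).mul_left 2)
      have hh : Real.sin (ip k p.1) ^ 2 ≤ 2 * (1 - Real.cos (ip k p.1)) := by
        nlinarith [Real.sin_sq_add_cos_sq (ip k p.1), sq_nonneg (1 - Real.cos (ip k p.1))]
      calc f p = W p * Real.sin (ip k p.1) ^ 2 := rfl
        _ ≤ W p * (2 * (1 - Real.cos (ip k p.1))) := mul_le_mul_of_nonneg_left hh (hW0 p)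
        _ = 2 * (W p * (1 - Real.cos (ip k p.1))) := by ring
    have hgbound : ∑' p, g p = (barA a z 0 - barA a z (fun j => 2 * l j)) / 2 := by
      rw [hbar_sub, eq_div_iff (by norm_num : (2:ℝ) ≠ 0), ← tsum_mul_right]
      refine tsum_congr fun p => ?_
      have hs : Real.sin (ip l p.1) ^ 2 * 2 = 1 - Real.cos (2 * ip l p.1) := by
        have h5 := Real.cos_sq (ip l p.1)
        nlinarith [Real.sin_sq_add_cos_sq (ip l p.1)]
      calc g p * 2 = W p * (Real.sin (ip l p.1) ^ 2 * 2) := by simp only [hg]; ring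
        _ = W p * (1 - Real.cos (2 * ip l p.1)) := by rw [hs]
        _ = W p * (1 - Real.cos (ip (fun j => 2 * l j) p.1)) := by rw [hip_two]
    calc (‖(∑' p, η p)‖) ^ 2 ≤ (2 * ∑' p, r p) ^ 2 :=
          pow_le_pow_left₀ (norm_nonneg _) hDle 2
      _ = 4 * (∑' p, r p) ^ 2 := by ring
      _ ≤ 4 * ((∑' p, f p) * (∑' p, g p)) := by linarith
      _ ≤ 4 * ((2 * (barA a z 0 - barA a z k)) * (∑' p, g p)) := by
          have := mul_le_mul_of_nonneg_right hfbound (tsum_nonneg hg0 : 0 ≤ ∑' p, g p)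
          linarith
      _ = 4 * ((barA a z 0 - barA a z k) * (barA a z 0 - barA a z (fun j => 2 * l j))) := by
          rw [hgbound]; ring
  -- Assembly
  set A1 := hatA a z (l + k)
  set A2 := hatA a z (l - k)
  set A0 := hatA a z l
  have hu : (1 : ℂ) - A1 ≠ 0 := sub_ne_zero.mpr (Ne.symm hplus)
  have hv : (1 : ℂ) - A2 ≠ 0 := sub_ne_zero.mpr (Ne.symm hminus)
  have hw : (1 : ℂ) - A0 ≠ 0 := sub_ne_zero.mpr (Ne.symm h₀)
  have key : (1 / 2 : ℂ) * ((1 - A1)⁻¹ + (1 - A2)⁻¹ - 2 * (1 - A0)⁻¹) =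
      (1 - A0)⁻¹ * (((1 - A1)⁻¹ + (1 - A2)⁻¹) / 2) * ((A1 + A2 - 2 * A0) / 2)
      + (1 - A0)⁻¹ * (1 - A1)⁻¹ * (1 - A2)⁻¹ * ((A1 - A2) ^ 2 / 4) := by
    have hk := key_id (1 - A1) (1 - A2) (1 - A0) hu hv hw
    rw [show (2 * (1 - A0) - (1 - A1) - (1 - A2) : ℂ) = A1 + A2 - 2 * A0 by ring,
      show ((1 - A2) - (1 - A1) : ℂ) = A1 - A2 by ring] at hk
    exact hk
  rw [key]
  set B0k := barA a z 0 - barA a z k with hB0k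
  set B02l := barA a z 0 - barA a z (fun j => 2 * l j) with hB02l
  have hB0k0 : 0 ≤ B0k := hbar_nonneg k
  have hB02l0 : 0 ≤ B02l := hbar_nonneg _
  have t1 : ‖((1 - A0)⁻¹ * (((1 - A1)⁻¹ + (1 - A2)⁻¹) / 2) * ((A1 + A2 - 2 * A0) / 2))‖
      ≤ ‖(1 - A0)⁻¹‖ * ((‖(1 - A1)⁻¹‖ + ‖(1 - A2)⁻¹‖) / 2) * B0k := by
    rw [norm_mul, norm_mul]
    have e1 : ‖(((1 - A1)⁻¹ + (1 - A2)⁻¹) / 2)‖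
        ≤ (‖(1 - A1)⁻¹‖ + ‖(1 - A2)⁻¹‖) / 2 := by
      rw [norm_div, Complex.norm_two]
      gcongr
      exact norm_add_le _ _
    have e2 : ‖((A1 + A2 - 2 * A0) / 2)‖ ≤ B0k := by
      rw [norm_div, Complex.norm_two, div_le_iff₀ (by norm_num : (0:ℝ) < 2)]
      calc ‖(A1 + A2 - 2 * A0)‖ ≤ 2 * B0k := hS
        _ = B0k * 2 := by ring
    refine mul_le_mul (mul_le_mul_of_nonneg_left e1 (norm_nonneg _)) e2
      (norm_nonneg _) ?_
    positivity
  have t2 : ‖((1 - A0)⁻¹ * (1 - A1)⁻¹ * (1 - A2)⁻¹ * ((A1 - A2) ^ 2 / 4))‖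
      ≤ ‖(1 - A0)⁻¹‖ * ‖(1 - A1)⁻¹‖ * ‖(1 - A2)⁻¹‖ *
        (B0k * B02l) := by
    rw [norm_mul, norm_mul, norm_mul]
    refine mul_le_mul_of_nonneg_left ?_ (by positivity)
    rw [norm_div, norm_pow]
    have h4 : ‖(4 : ℂ)‖ = 4 := by
      rw [show (4 : ℂ) = ((4 : ℝ) : ℂ) by norm_num, Complex.norm_real]
      norm_num
    rw [h4, div_le_iff₀ (by norm_num : (0:ℝ) < 4)]
    calc (‖(A1 - A2)‖) ^ 2 ≤ 4 * (B0k * B02l) := hD2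
      _ = B0k * B02l * 4 := by ring
  calc ‖((1 - A0)⁻¹ * (((1 - A1)⁻¹ + (1 - A2)⁻¹) / 2) * ((A1 + A2 - 2 * A0) / 2)
        + (1 - A0)⁻¹ * (1 - A1)⁻¹ * (1 - A2)⁻¹ * ((A1 - A2) ^ 2 / 4))‖
      ≤ ‖((1 - A0)⁻¹ * (((1 - A1)⁻¹ + (1 - A2)⁻¹) / 2) * ((A1 + A2 - 2 * A0) / 2))‖
        + ‖((1 - A0)⁻¹ * (1 - A1)⁻¹ * (1 - A2)⁻¹ * ((A1 - A2) ^ 2 / 4))‖ :=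
        norm_add_le _ _
    _ ≤ ‖(1 - A0)⁻¹‖ * ((‖(1 - A1)⁻¹‖ + ‖(1 - A2)⁻¹‖) / 2) * B0k
        + ‖(1 - A0)⁻¹‖ * ‖(1 - A1)⁻¹‖ * ‖(1 - A2)⁻¹‖ *
          (B0k * B02l) := add_le_add t1 t2
    _ = B0k * (((‖(1 - A1)⁻¹‖ + ‖(1 - A2)⁻¹‖) / 2) * ‖(1 - A0)⁻¹‖
        + ‖(1 - A0)⁻¹‖ * ‖(1 - A1)⁻¹‖ * ‖(1 - A2)⁻¹‖ * B02l) := by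
        ring
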